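/- arXiv:1610.02861 — 3 statements merged into one kernel-verified Lean document; each statement's English description precedes it below -/
import Mathlib

section
/- Σ over all ordered partitions I = (I_1,...,I_k) of {1,...,n} into k disjoint nonempty blocks of (#I_1)!···(#I_k)! equals n!·binom(n-1,k-1). -/
open Finset Equiv MulAction

/-!
Group the surjections `f : α → ι` by their fibre-size vector `c`, a composition of `n = #α`
into `k = #ι` positive parts. The maps with fibre sizes `c` form a single orbit of `Perm α`
acting by precomposition, and the stabiliser of such a map is `∏ i, Perm (f ⁻¹ i)`, of order
`∏ i, (c i)!`; so by orbit–stabiliser each class contributes exactly `n!` to the sum.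
Subtracting `1` from every part turns the positive compositions into the weak compositions of
`n - k` into `k` parts, of which there are `C(n - 1, k - 1)` by stars and bars.
-/

lemma card_piAntidiag_univ {ι : Type*} [Fintype ι] [DecidableEq ι] (m : ℕ) :
    #(piAntidiag (univ : Finset ι) m) = (Fintype.card ι + m - 1).choose m := by
  rw [← Sym.card_sym_eq_choose, ← Fintype.card_coe,
    Fintype.card_congr ((Sym.equivNatSumOfFintype ι m).trans
      (subtypeEquivRight fun c => by simp)).symm]

lemma card_filter_pos_piAntidiag_univ {ι : Type*} [Fintype ι] [DecidableEq ι] {n : ℕ}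
    (hn : Fintype.card ι ≤ n) :
    #{c ∈ piAntidiag (univ : Finset ι) n | ∀ i, 0 < c i} =
      #(piAntidiag (univ : Finset ι) (n - Fintype.card ι)) := by
  have sum_succ (d : ι → ℕ) : ∑ i, (d i + 1) = ∑ i, d i + Fintype.card ι := by
    simp [sum_add_distrib]
  refine card_nbij' (fun c i => c i - 1) (fun d i => d i + 1) (fun c hc => ?_) (fun d hd => ?_)
    (fun c hc => ?_) (fun d _ => ?_)
  · simp only [coe_filter, mem_piAntidiag, mem_univ, Set.mem_ofPred_eq, mem_coe] at hc ⊢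
    have := sum_succ (fun i => c i - 1)
    rw [sum_congr rfl fun i _ => Nat.sub_add_cancel (hc.2 i)] at this
    simp only [implies_true, and_true]
    omega
  · simp only [coe_filter, mem_piAntidiag, mem_univ, Set.mem_ofPred_eq, mem_coe] at hd ⊢
    simp only [sum_succ, hd.1, implies_true, and_true, Nat.succ_pos]
    omega
  · simp only [coe_filter, mem_piAntidiag, mem_univ, Set.mem_ofPred_eq] at hc
    funext i
    exact Nat.sub_add_cancel (hc.2 i)
  · simp

lemma card_filter_pos_piAntidiag_univ_eq_choose {ι : Type*} [Fintype ι] [DecidableEq ι] {n : ℕ}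
    (hι : 0 < Fintype.card ι) (hn : Fintype.card ι ≤ n) :
    #{c ∈ piAntidiag (univ : Finset ι) n | ∀ i, 0 < c i} =
      (n - 1).choose (Fintype.card ι - 1) := by
  rw [card_filter_pos_piAntidiag_univ hn, card_piAntidiag_univ,
    show Fintype.card ι + (n - Fintype.card ι) - 1 = n - 1 by omega]
  exact Nat.choose_symm_of_eq_add (by omega)

lemma card_fiber_mem_piAntidiag {α ι : Type*} [Fintype α] [Fintype ι] [DecidableEq ι]
    (f : α → ι) : (fun i => #{a | f a = i}) ∈ piAntidiag univ (Fintype.card α) := by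
  simpa [eq_comm] using card_eq_sum_card_fiberwise (f := f) (s := univ) (t := univ) (by simp)

lemma surjective_iff_card_fiber_pos {α ι : Type*} [Fintype α] [DecidableEq ι] {f : α → ι} :
    Function.Surjective f ↔ ∀ i, 0 < #{a | f a = i} := by
  simp [card_pos, filter_nonempty_iff, Function.Surjective]

lemma exists_card_fiber_eq {α ι : Type*} [Fintype α] [Fintype ι] [DecidableEq ι] (c : ι → ℕ)
    (hc : ∑ i, c i = Fintype.card α) : ∃ f : α → ι, ∀ i, #{a | f a = i} = c i := by
  have : Fintype.card α = Fintype.card (Σ i, Fin (c i)) := by simp [hc]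
  let e := Fintype.equivOfCardEq this
  refine ⟨fun a => (e a).1, fun i => ?_⟩
  rw [← Fintype.card_subtype, ← Fintype.card_fin (c i)]
  exact Fintype.card_congr ((e.subtypeEquiv fun a => Iff.rfl).trans (sigmaSubtype i))

lemma DomMulAct.mem_orbit_perm_iff {α ι : Type*} [Fintype α] [DecidableEq ι] {f g : α → ι} :
    g ∈ orbit (Perm α)ᵈᵐᵃ f ↔ ∀ i, #{a | g a = i} = #{a | f a = i} := by
  simp only [← Fintype.card_subtype]
  constructor
  · rintro ⟨σ, rfl⟩ i
    exact Fintype.card_congr ((mk.symm σ).subtypeEquiv fun a => Iff.rfl)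
  · intro h
    let φ i : {a // f a = i} ≃ {a // g a = i} := (Fintype.card_eq.mp (h i).symm).some
    refine ⟨mk (ofFiberEquiv φ).symm, funext fun a => ?_⟩
    have := ofFiberEquiv_map φ ((ofFiberEquiv φ).symm a)
    rw [apply_symm_apply] at this
    exact this.symm

lemma card_filter_card_fiber_eq_mul_prod_factorial {α ι : Type*} [Fintype α] [DecidableEq α]
    [Fintype ι] [DecidableEq ι] (c : ι → ℕ) (hc : ∑ i, c i = Fintype.card α) :
    #{f : α → ι | ∀ i, #{a | f a = i} = c i} * ∏ i, (c i).factorial =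
      (Fintype.card α).factorial := by
  obtain ⟨f, hf⟩ := exists_card_fiber_eq c hc
  have horbit : (orbit (Perm α)ᵈᵐᵃ f).ncard = #{g : α → ι | ∀ i, #{a | g a = i} = c i} := by
    rw [← Set.ncard_coe_finset]
    congr 1
    ext g
    simp [DomMulAct.mem_orbit_perm_iff, hf]
  have hstab : Nat.card (stabilizer (Perm α)ᵈᵐᵃ f) = ∏ i, (c i).factorial := by
    simp only [← hf, ← Fintype.card_subtype]
    rw [← DomMulAct.stabilizer_card, ← Nat.card_eq_fintype_card]
    exact Nat.card_congr (subtypeEquiv DomMulAct.mk.symm fun _ => DomMulAct.mem_stabilizer_iff)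
  rw [← horbit, ← index_stabilizer, ← hstab, mul_comm, Subgroup.card_mul_index,
    Nat.card_congr DomMulAct.mk.symm, Nat.card_perm, Nat.card_eq_fintype_card]

theorem sum_surjective_prod_factorial_card_fiber {α ι : Type*} [Fintype α] [DecidableEq α]
    [Fintype ι] [DecidableEq ι] (hι : 0 < Fintype.card ι)
    (hια : Fintype.card ι ≤ Fintype.card α) :
    ∑ f : α → ι with Function.Surjective f, ∏ i, (#{a | f a = i}).factorial =
      (Fintype.card α).factorial * (Fintype.card α - 1).choose (Fintype.card ι - 1) := by
  have hmaps : ∀ f ∈ ({f : α → ι | Function.Surjective f} : Finset (α → ι)),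
      (fun i => #{a | f a = i}) ∈
        {c ∈ piAntidiag (univ : Finset ι) (Fintype.card α) | ∀ i, 0 < c i} := fun f hf =>
    mem_filter.mpr ⟨card_fiber_mem_piAntidiag f,
      surjective_iff_card_fiber_pos.mp (mem_filter.mp hf).2⟩
  rw [← sum_fiberwise_of_maps_to hmaps, ← card_filter_pos_piAntidiag_univ_eq_choose hι hια,
    mul_comm, ← smul_eq_mul, ← sum_const]
  refine sum_congr rfl fun c hc => ?_
  obtain ⟨hc, hpos⟩ := mem_filter.mp hc
  have hclass : {f ∈ ({f : α → ι | Function.Surjective f} : Finset (α → ι)) |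
      (fun i => #{a | f a = i}) = c} =
        ({f : α → ι | ∀ i, #{a | f a = i} = c i} : Finset (α → ι)) := by
    ext f
    simp only [mem_filter, mem_univ, true_and, funext_iff, surjective_iff_card_fiber_pos]
    exact ⟨And.right, fun h => ⟨fun i => h i ▸ hpos i, h⟩⟩
  rw [hclass, ← card_filter_card_fiber_eq_mul_prod_factorial c (by simpa using hc),
    ← smul_eq_mul, ← sum_const]
  exact sum_congr rfl fun f hf => prod_congr rfl fun i _ => by rw [(mem_filter.mp hf).2 i]

open scoped Classical in
/-- Summing `(#I_1)!⋯(#I_k)!` over all ordered partitions `I = (I_1,...,I_k)` of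
`{1,...,n}` into `k` disjoint nonempty blocks (encoded as surjections
`f : Fin n → Fin k`) gives `n!·binom(n-1,k-1)`. -/
theorem stmt11 (n k : ℕ) (hk : 0 < k) (hkn : k ≤ n) :
    (∑ f ∈ (univ : Finset (Fin n → Fin k)).filter (fun f => Function.Surjective f),
        ∏ l : Fin k, Nat.factorial (univ.filter (fun i => f i = l)).card)
      = Nat.factorial n * Nat.choose (n - 1) (k - 1) := by
  simpa using sum_surjective_prod_factorial_card_fiber (α := Fin n) (ι := Fin k)
    (by simpa using hk) (by simpa using hkn)
end

section
/- Let x_1,...,x_n ∈ R^d with partial sums s_i = x_1 + ... + x_i, and let A : R^n → R^d be the linear map with A e_i = x_i. For indices 1 ≤ i_1 < ... < i_k ≤ n, the origin 0 lies in the convex hull of {s_{i_1},...,s_{i_k}} if and only if the k-dimensional face F of the cone C^B = {β : β_1 ≥ ... ≥ β_n ≥ 0} indexed by (i_1,...,i_k) satisfies F ∩ ker A ≠ {0}. -/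
/-!
The points of the face `F` are exactly the vectors `β = ∑ₗ cₗ • 𝟙[1, iₗ]` (`tailWeight ι c`) with
`c ≥ 0`, where `cₗ` is the drop of `β` after position `iₗ`. By Abel summation
`∑ᵢ βᵢ xᵢ = ∑ₗ cₗ s_{iₗ}`, so after scaling a nonzero point of `F ∩ ker A` is the same thing as
a convex combination of the `s_{iₗ}` that vanishes.
-/

open Finset

theorem zero_mem_convexHull_range_iff {κ 𝕜 E : Type*} [Fintype κ] [Field 𝕜] [LinearOrder 𝕜]
    [IsStrictOrderedRing 𝕜] [AddCommGroup E] [Module 𝕜 E] {f : κ → E} :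
    (0 : E) ∈ convexHull 𝕜 (Set.range f) ↔ ∃ c : κ → 𝕜, 0 ≤ c ∧ c ≠ 0 ∧ ∑ l, c l • f l = 0 := by
  classical
  constructor
  · rw [convexHull_range_eq_exists_affineCombination]
    rintro ⟨t, w, hw₀, hw₁, hwf⟩
    rw [affineCombination_eq_linear_combination _ _ _ hw₁] at hwf
    refine ⟨fun l => if l ∈ t then w l else 0, fun l => ?_, fun hc => ?_, ?_⟩
    · by_cases hl : l ∈ t <;> simp [hl, hw₀]
    · simpa [hw₁] using congr_arg (∑ l, · l) hc
    · simpa [ite_smul] using hwf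
  · rintro ⟨c, hc₀, hc, hcf⟩
    have : univ.centerMass c f = 0 := by rw [centerMass, hcf, smul_zero]
    exact this ▸ centerMass_mem_convexHull _ (fun l _ => hc₀ l)
      (Fintype.sum_pos (lt_of_le_of_ne hc₀ (Ne.symm hc))) fun l _ => Set.mem_range_self l

theorem Fin.sum_Ici_sub_succ {M : Type*} [AddCommGroup M] {n : ℕ} (b : ℕ → M) (p : Fin n) :
    ∑ m ∈ Ici p, (b m - b (m + 1)) = b p - b n := by
  have h := sum_map (Ici p) Fin.valEmbedding fun j => b j - b (j + 1)
  rw [Fin.map_valEmbedding_Ici, Fin.valEmbedding_apply] at h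
  rw [← h, ← neg_sub, ← sum_Ico_sub b p.is_lt.le, ← sum_neg_distrib]
  simp

section tailWeight

variable {κ α R : Type*} [Fintype κ]

def tailWeight [LinearOrder α] [AddCommMonoid R] (ι : κ → α) (c : κ → R) (p : α) : R :=
  ∑ l with p ≤ ι l, c l

section LinearOrder

variable [LinearOrder α]

theorem sum_smul_sum_Iic_eq_sum_tailWeight_smul {M : Type*} [Fintype α] [LocallyFiniteOrderBot α]
    [Semiring R] [AddCommMonoid M] [Module R M] (ι : κ → α) (c : κ → R) (x : α → M) :
    ∑ l, c l • ∑ p ∈ Iic (ι l), x p = ∑ p, tailWeight ι c p • x p := by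
  simp only [tailWeight, smul_sum, sum_smul]
  exact sum_comm' fun l p => by simp

variable [AddCommMonoid R] [PartialOrder R] [IsOrderedAddMonoid R] {ι : κ → α} {c : κ → R}

theorem tailWeight_nonneg (hc : 0 ≤ c) (p : α) : 0 ≤ tailWeight ι c p :=
  sum_nonneg fun l _ => hc l

theorem tailWeight_antitone (hc : 0 ≤ c) : Antitone (tailWeight ι c) :=
  fun _ _ hpq => sum_le_sum_of_subset_of_nonneg (monotone_filter_right _ fun _ _ => hpq.trans)
    fun l _ _ => hc l

theorem tailWeight_eq_zero_iff (hc : 0 ≤ c) : tailWeight ι c = 0 ↔ c = 0 := by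
  refine ⟨fun h => funext fun l => le_antisymm ?_ (hc l),
    fun h => h ▸ funext fun _ => sum_const_zero⟩
  calc c l ≤ tailWeight ι c (ι l) := single_le_sum (fun l _ => hc l) (by simp)
    _ = 0 := congr_fun h _

end LinearOrder

variable [AddCommMonoid R] {n : ℕ} {ι : κ → Fin n}

theorem tailWeight_eq_tailWeight_succ (c : κ → R) {m : Fin n} (hm : ∀ l, ι l ≠ m)
    (h : (m : ℕ) + 1 < n) : tailWeight ι c m = tailWeight ι c ⟨m + 1, h⟩ := by
  refine sum_congr (filter_congr fun l _ => ?_) fun _ _ => rfl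
  have := Fin.val_ne_of_ne (hm l)
  simp only [Fin.le_def]
  omega

theorem tailWeight_last (c : κ → R) {m : Fin n} (hm : ∀ l, ι l ≠ m) (h : (m : ℕ) + 1 = n) :
    tailWeight ι c m = 0 := by
  refine sum_eq_zero fun l hl => absurd ?_ (hm l)
  have := (ι l).is_lt
  rw [mem_filter, Fin.le_def] at hl
  exact Fin.ext (by omega)

theorem exists_nonneg_tailWeight_eq (hι : Function.Injective ι) {β : Fin n → ℝ}
    (hanti : Antitone β) (hnonneg : 0 ≤ β)
    (hface : ∀ m : Fin n, (∀ l, ι l ≠ m) →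
      (∀ h : (m : ℕ) + 1 < n, β m = β ⟨(m : ℕ) + 1, h⟩) ∧ ((m : ℕ) + 1 = n → β m = 0)) :
    ∃ c : κ → ℝ, 0 ≤ c ∧ tailWeight ι c = β := by
  let b : ℕ → ℝ := fun j => if h : j < n then β ⟨j, h⟩ else 0
  let δ : Fin n → ℝ := fun m => b m - b (m + 1)
  have hδ_succ : ∀ m : Fin n, ∀ h : (m : ℕ) + 1 < n, δ m = β m - β ⟨m + 1, h⟩ := by
    intro m h; simp [δ, b, h]
  have hδ_last : ∀ m : Fin n, (m : ℕ) + 1 = n → δ m = β m := by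
    intro m h; simp [δ, b, h]
  have hδ_nonneg : ∀ m, 0 ≤ δ m := by
    intro m
    by_cases h : (m : ℕ) + 1 < n
    · rw [hδ_succ m h, sub_nonneg]
      exact hanti (Fin.le_def.2 m.val.le_succ)
    · rw [hδ_last m (by omega)]
      exact hnonneg m
  have hδ_zero : ∀ m, (∀ l, ι l ≠ m) → δ m = 0 := by
    intro m hm
    by_cases h : (m : ℕ) + 1 < n
    · rw [hδ_succ m h, (hface m hm).1 h, sub_self]
    · rw [hδ_last m (by omega), (hface m hm).2 (by omega)]
  have htelescope : ∀ p, ∑ m ∈ Ici p, δ m = β p := by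
    intro p
    rw [Fin.sum_Ici_sub_succ]
    simp [b]
  refine ⟨fun l => δ (ι l), fun l => hδ_nonneg _, funext fun p => ?_⟩
  rw [← htelescope]
  exact sum_of_injOn ι hι.injOn (fun l hl => by simpa using hl)
    (fun m hpm hm => hδ_zero m fun l hl => hm ⟨l, by simpa [hl] using hpm, hl⟩) fun _ _ => rfl

end tailWeight

theorem stmt13_general (d n k : ℕ)
    (x : Fin n → Fin d → ℝ)
    (s : Fin n → Fin d → ℝ) (hs : ∀ i, s i = ∑ m ∈ Finset.Iic i, x m)
    (ι : Fin k → Fin n) (hι : StrictMono ι) :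
    (0 : Fin d → ℝ) ∈ convexHull ℝ (Set.range fun l => s (ι l)) ↔
      ∃ β : Fin n → ℝ, β ≠ 0 ∧ (∑ i, β i • x i) = 0 ∧
        (∀ i j : Fin n, i ≤ j → β j ≤ β i) ∧ (∀ i, 0 ≤ β i) ∧
        (∀ m : Fin n, (∀ l, ι l ≠ m) →
          (∀ h : (m : ℕ) + 1 < n, β m = β ⟨(m : ℕ) + 1, h⟩) ∧ ((m : ℕ) + 1 = n → β m = 0)) := by
  simp_rw [zero_mem_convexHull_range_iff, hs, sum_smul_sum_Iic_eq_sum_tailWeight_smul]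
  constructor
  · rintro ⟨c, hc, hc0, hsum⟩
    exact ⟨tailWeight ι c, (tailWeight_eq_zero_iff hc).not.2 hc0, hsum,
      fun _ _ => (tailWeight_antitone hc ·), tailWeight_nonneg hc,
      fun m hm => ⟨tailWeight_eq_tailWeight_succ c hm, tailWeight_last c hm⟩⟩
  · rintro ⟨β, hβ, hsum, hanti, hnonneg, hface⟩
    obtain ⟨c, hc, rfl⟩ :=
      exists_nonneg_tailWeight_eq hι.injective (fun _ _ => hanti _ _) hnonneg hface
    exact ⟨c, hc, (tailWeight_eq_zero_iff hc).not.1 hβ, hsum⟩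

/-- Let `x_1,...,x_n ∈ ℝ^d` with partial sums `s_i`, and let `A : ℝ^n → ℝ^d` be the
linear map with `A e_i = x_i`, i.e. `A β = Σ_i β_i x_i`. For `1 ≤ i_1 < ... < i_k ≤ n`
(given by a strictly monotone `ι : Fin k → Fin n`), the origin lies in the convex hull
of `{s_{i_1},...,s_{i_k}}` iff the `k`-face `F` of `C^B = {β : β_1 ≥ ... ≥ β_n ≥ 0}`
indexed by `(i_1,...,i_k)` satisfies `F ∩ ker A ≠ {0}`. -/
theorem stmt13 (d n k : ℕ) (hk : 0 < k) (hkn : k ≤ n)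
    (x : Fin n → Fin d → ℝ)
    (s : Fin n → Fin d → ℝ) (hs : ∀ i, s i = ∑ m ∈ Finset.Iic i, x m)
    (ι : Fin k → Fin n) (hι : StrictMono ι) :
    (0 : Fin d → ℝ) ∈ convexHull ℝ (Set.range fun l => s (ι l)) ↔
      ∃ β : Fin n → ℝ, β ≠ 0 ∧ (∑ i, β i • x i) = 0 ∧
        (∀ i j : Fin n, i ≤ j → β j ≤ β i) ∧ (∀ i, 0 ≤ β i) ∧
        (∀ m : Fin n, (∀ l, ι l ≠ m) →
          (∀ h : (m : ℕ) + 1 < n, β m = β ⟨(m : ℕ) + 1, h⟩) ∧ ((m : ℕ) + 1 = n → β m = 0)) :=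
  stmt13_general d n k x s hs ι hι
end

section
/- Let ξ_1,ξ_2,... be i.i.d. R^d-valued random vectors with ξ_1 distributed as -ξ_1. Then the following are equivalent: (i) for every n and every 1 ≤ i_1 < ... < i_d ≤ n, the vectors S_{i_1},...,S_{i_d} are a.s. linearly independent; (ii) P[ξ_1 ∈ H] = 0 for every affine hyperplane H ⊂ R^d; (iii) P[S_i ∈ H_0] = 0 for every linear hyperplane H_0 ⊂ R^d and every i ≥ 1. -/
/-!
(ii) ⇒ (iii): a sum of independent vectors, one of which charges no affine hyperplane, charges
none either (Fubini). (ii) ⇒ (i): write `S_{i_k}` as `S_{i_{k-1}}` plus the independent block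
`ξ_{i_{k-1}+1} + ... + ξ_{i_k}`; on the event that the earlier sums are independent, dependence
forces that block into their span, a proper subspace, hence into a linear hyperplane.
(i) ⇒ (ii) and (iii) ⇒ (ii) use the symmetry. With `p = P[f(ξ_1) = c]`, the event
`f(ξ_m) = (-1)^m c` for all `m ≤ 2d` has probability `p^{2d}` and puts `S_2, S_4, ..., S_{2d}`
into `ker f`; likewise `p² = P[f(ξ_1) = c, f(ξ_2) = -c] ≤ P[f(S_2) = 0]`.
-/

open Finset MeasureTheory ProbabilityTheory Module

lemma sum_range_neg_one_pow_mul_eq_zero {R : Type*} [Ring R] (c : R) {n : ℕ} (hn : Even n) :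
    ∑ m ∈ range n, (-1) ^ m * c = 0 := by
  rw [← sum_mul, sum_range fun m => (-1 : R) ^ m, Fin.sum_neg_one_pow, if_pos hn, zero_mul]

section LinearAlgebra

open Submodule

variable {K V ι : Type*} [Field K] [AddCommGroup V] [Module K V] [Fintype ι]

lemma exists_ne_zero_span_range_le_ker_of_card_lt_finrank (v : ι → V)
    (hv : Fintype.card ι < finrank K V) :
    ∃ g : V →ₗ[K] K, g ≠ 0 ∧ span K (Set.range v) ≤ g.ker :=
  (span K (Set.range v)).exists_le_ker_of_lt_top <| lt_top_iff_ne_top.2 fun h => by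
    have := finrank_range_le_card (R := K) v
    rw [Set.finrank, h, finrank_top] at this
    omega

lemma LinearIndependent.card_lt_finrank_of_forall_map_eq_zero [FiniteDimensional K V]
    {v : ι → V} (hv : LinearIndependent K v) {f : V →ₗ[K] K} (hf : f ≠ 0)
    (hvf : ∀ i, f (v i) = 0) : Fintype.card ι < finrank K V :=
  calc Fintype.card ι = finrank K (span K (Set.range v)) := (finrank_span_eq_card hv).symm
    _ ≤ finrank K f.ker := Submodule.finrank_mono (span_le.2 (Set.range_subset_iff.2 hvf))
    _ < finrank K V := Submodule.finrank_lt fun h => hf (LinearMap.ker_eq_top.1 h)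

end LinearAlgebra

lemma measurable_iSup_comap_sum {Ω ι M : Type*} [AddCommMonoid M] {mM : MeasurableSpace M}
    [MeasurableAdd₂ M] {ξ : ι → Ω → M} {s : Set ι} {u : Finset ι} (hu : ↑u ⊆ s) :
    Measurable[⨆ i ∈ s, mM.comap (ξ i)] (fun ω => ∑ i ∈ u, ξ i ω) :=
  Finset.measurable_sum _ fun i hi =>
    (comap_measurable (ξ i)).mono (le_iSup₂ (f := fun i _ => mM.comap (ξ i)) i (hu hi)) le_rfl

namespace ProbabilityTheory

variable {Ω : Type*} [MeasurableSpace Ω] {P : Measure Ω}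

lemma iIndepFun.indepFun_of_measurable_iSup {ι β γ δ : Type*} {mβ : MeasurableSpace β}
    [MeasurableSpace γ] [MeasurableSpace δ] {ξ : ι → Ω → β}
    (hξ : ∀ i, Measurable (ξ i)) (hind : iIndepFun ξ P) {s t : Set ι} (hst : Disjoint s t)
    {X : Ω → γ} {Y : Ω → δ} (hX : Measurable[⨆ i ∈ s, mβ.comap (ξ i)] X)
    (hY : Measurable[⨆ i ∈ t, mβ.comap (ξ i)] Y) : IndepFun X Y P :=
  (IndepFun_iff_Indep X Y P).2 <| indep_of_indep_of_le
    (indep_iSup_of_disjoint (fun i => (hξ i).comap_le) hind.iIndep hst) hX.comap_le hY.comap_le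

lemma IndepFun.measure_prodMk_mem_eq_zero [IsFiniteMeasure P] {α β : Type*}
    [MeasurableSpace α] [MeasurableSpace β] {X : Ω → α} {Y : Ω → β}
    (hX : Measurable X) (hY : Measurable Y) (hXY : IndepFun X Y P)
    {A : Set (α × β)} (hA : MeasurableSet A) (hslice : ∀ a, P {ω | (a, Y ω) ∈ A} = 0) :
    P {ω | (X ω, Y ω) ∈ A} = 0 := by
  have hlaw := (indepFun_iff_map_prod_eq_prod_map_map hX.aemeasurable hY.aemeasurable).mp hXY
  have hslice' (a : α) : P.map Y (Prod.mk a ⁻¹' A) = 0 := by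
    rw [Measure.map_apply hY (measurable_prodMk_left hA)]
    exact hslice a
  change P ((fun ω => (X ω, Y ω)) ⁻¹' A) = 0
  rw [← Measure.map_apply (hX.prodMk hY) hA, hlaw, Measure.prod_apply hA]
  simp [hslice']

lemma IndepFun.measure_add_eq_eq_zero [IsFiniteMeasure P] {G : Type*} [AddGroup G]
    [MeasurableSpace G] [MeasurableAdd₂ G] [MeasurableSingletonClass G] {X Y : Ω → G}
    (hX : Measurable X) (hY : Measurable Y) (hXY : IndepFun X Y P)
    (hY0 : ∀ c, P {ω | Y ω = c} = 0) (c : G) :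
    P {ω | X ω + Y ω = c} = 0 :=
  hXY.measure_prodMk_mem_eq_zero (A := {p | p.1 + p.2 = c}) hX hY
    (measurable_add (measurableSet_singleton c)) fun a => by
      simpa only [Set.mem_ofPred_eq, ← eq_neg_add_iff_add_eq] using hY0 (-a + c)

lemma IndepFun.measure_eq_mul_measure_eq_neg_le {X Y : Ω → ℝ} (hXY : IndepFun X Y P) (c : ℝ) :
    P {ω | X ω = c} * P {ω | Y ω = -c} ≤ P {ω | X ω + Y ω = 0} := by
  calc P {ω | X ω = c} * P {ω | Y ω = -c} = P (X ⁻¹' {c} ∩ Y ⁻¹' {-c}) :=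
        (hXY.measure_inter_preimage_eq_mul _ _ (measurableSet_singleton c)
          (measurableSet_singleton (-c))).symm
    _ ≤ P {ω | X ω + Y ω = 0} := measure_mono fun ω ⟨hX, hY⟩ => by simp_all

section FiniteDimensional

open Submodule

variable {E : Type*} [NormedAddCommGroup E] [NormedSpace ℝ E] [FiniteDimensional ℝ E]
  [MeasurableSpace E] [BorelSpace E]

lemma IdentDistrib.measure_map_eq_neg_eq {X : Ω → E}
    (hX : IdentDistrib X (fun ω => -X ω) P P) (f : E →ₗ[ℝ] ℝ) (c : ℝ) :
    P {ω | f (X ω) = -c} = P {ω | f (X ω) = c} := by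
  refine ((hX.comp f.continuous_of_finiteDimensional.measurable).measure_mem_eq
    (measurableSet_singleton (-c))).trans (congrArg P ?_)
  ext ω
  simp [neg_eq_iff_eq_neg]

lemma iIndepFun.measure_map_sum_eq_eq_zero [IsProbabilityMeasure P] {ξ : ℕ → Ω → E}
    (hξ : ∀ m, Measurable (ξ m)) (hind : iIndepFun ξ P) (g : E →ₗ[ℝ] ℝ) {s : Finset ℕ} {j : ℕ}
    (hj : j ∈ s) (hξj : ∀ c, P {ω | g (ξ j ω) = c} = 0) (c : ℝ) :
    P {ω | g (∑ m ∈ s, ξ m ω) = c} = 0 := by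
  have hg : Measurable g := g.continuous_of_finiteDimensional.measurable
  have hrest : IndepFun (∑ m ∈ s.erase j, ξ m) (ξ j) P :=
    hind.indepFun_finsetSum_of_notMem hξ (s.notMem_erase j)
  have := (hrest.comp hg hg).measure_add_eq_eq_zero (hg.comp (by fun_prop)) (hg.comp (hξ j))
    hξj c
  simpa [← map_add, Finset.sum_erase_add s _ hj] using this

lemma IndepFun.measure_not_linearIndependent_snoc_le [IsFiniteMeasure P] {k : ℕ}
    {X : Ω → Fin k → E} {Y W : Ω → E} (hX : Measurable X) (hY : Measurable Y)
    (hXY : IndepFun X Y P) (hk : k < finrank ℝ E)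
    (hYg : ∀ g : E →ₗ[ℝ] ℝ, g ≠ 0 → P {ω | g (Y ω) = 0} = 0)
    (hWY : ∀ ω, W ω - Y ω ∈ span ℝ (Set.range (X ω))) :
    P {ω | ¬ LinearIndependent ℝ (Fin.snoc (X ω) (W ω))} ≤
      P {ω | ¬ LinearIndependent ℝ (X ω)} := by
  set A : Set ((Fin k → E) × E) :=
    {p | LinearIndependent ℝ p.1 ∧ ¬ LinearIndependent ℝ (Fin.snoc p.1 p.2 : Fin (k + 1) → E)}
  have hsnoc : Measurable fun p : (Fin k → E) × E => (Fin.snoc p.1 p.2 : Fin (k + 1) → E) := by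
    simpa [Fin.insertNth_last', Function.comp_def, Fin.snocEquiv] using
      (MeasurableEquiv.piFinSuccAbove (fun _ => E) (Fin.last k)).symm.measurable.comp
        (measurable_snd.prodMk measurable_fst)
  have hA : MeasurableSet A :=
    (isOpen_setOfPred_linearIndependent.measurableSet.preimage measurable_fst).inter
      (isOpen_setOfPred_linearIndependent.measurableSet.preimage hsnoc).compl
  have hnull : P {ω | (X ω, Y ω) ∈ A} = 0 := by
    refine hXY.measure_prodMk_mem_eq_zero hX hY hA fun a => ?_
    obtain ⟨g, hg, hle⟩ := exists_ne_zero_span_range_le_ker_of_card_lt_finrank (K := ℝ) a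
      (by simpa using hk)
    refine measure_mono_null (fun ω ⟨ha, hdep⟩ => ?_) (hYg g hg)
    rw [linearIndependent_finSnoc, not_and_not_right] at hdep
    exact hle (hdep ha)
  calc P {ω | ¬ LinearIndependent ℝ (Fin.snoc (X ω) (W ω))}
      ≤ P ({ω | ¬ LinearIndependent ℝ (X ω)} ∪ {ω | (X ω, Y ω) ∈ A}) := by
        refine measure_mono fun ω hω => ?_
        by_cases hXω : LinearIndependent ℝ (X ω)
        · refine Or.inr ⟨hXω, fun hXYω => ?_⟩
          rw [Set.mem_ofPred_eq, linearIndependent_finSnoc] at hω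
          rw [linearIndependent_finSnoc] at hXYω
          exact hω ⟨hXω, fun hW => hXYω.2 (by simpa using sub_mem hW (hWY ω))⟩
        · exact Or.inl hXω
    _ ≤ P {ω | ¬ LinearIndependent ℝ (X ω)} + P {ω | (X ω, Y ω) ∈ A} := measure_union_le _ _
    _ = P {ω | ¬ LinearIndependent ℝ (X ω)} := by rw [hnull, add_zero]

lemma iIndepFun.measure_not_linearIndependent_partialSums_eq_zero
    [IsProbabilityMeasure P] {ξ : ℕ → Ω → E} (hξ : ∀ m, Measurable (ξ m))
    (hind : iIndepFun ξ P) (hξg : ∀ g : E →ₗ[ℝ] ℝ, g ≠ 0 → ∀ m c, P {ω | g (ξ m ω) = c} = 0)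
    {k : ℕ} (hk : k ≤ finrank ℝ E) {ι : Fin k → ℕ} (hι : StrictMono ι) :
    P {ω | ¬ LinearIndependent ℝ (fun l => ∑ m ∈ range (ι l + 1), ξ m ω)} = 0 := by
  induction k with
  | zero => simp
  | succ k ih =>
    -- `start = ι (k - 1) + 1`, or `0` when `k = 0`
    set start := univ.sup fun l : Fin k => ι l.castSucc + 1
    have hstart (l : Fin k) : ι l.castSucc + 1 ≤ start :=
      le_sup (f := fun l : Fin k => ι l.castSucc + 1) (mem_univ l)
    have hstart_le : start ≤ ι (Fin.last k) :=
      Finset.sup_le fun l _ => hι (Fin.castSucc_lt_last l)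
    set X : Ω → Fin k → E := fun ω l => ∑ m ∈ range (ι l.castSucc + 1), ξ m ω
    set Y : Ω → E := fun ω => ∑ m ∈ Ico start (ι (Fin.last k) + 1), ξ m ω
    have hX : Measurable[⨆ m ∈ Set.Iio start, ‹MeasurableSpace E›.comap (ξ m)] X :=
      @measurable_pi_lambda _ _ _ (⨆ m ∈ Set.Iio start, _) _ X fun l =>
        measurable_iSup_comap_sum fun m hm => (mem_range.1 hm).trans_le (hstart l)
    have hY : Measurable[⨆ m ∈ Set.Ici start, ‹MeasurableSpace E›.comap (ξ m)] Y :=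
      measurable_iSup_comap_sum fun m hm => (mem_Ico.1 hm).1
    have hle (s : Set ℕ) : ⨆ m ∈ s, ‹MeasurableSpace E›.comap (ξ m) ≤ ‹MeasurableSpace Ω› :=
      iSup₂_le fun m _ => (hξ m).comap_le
    have hspan (ω : Ω) : ∑ m ∈ range start, ξ m ω ∈ span ℝ (Set.range (X ω)) := by
      rcases (univ : Finset (Fin k)).eq_empty_or_nonempty with h | h
      · simp [start, h]
      · obtain ⟨l, -, hl⟩ := exists_mem_eq_sup _ h fun l => ι l.castSucc + 1
        rw [show start = _ from hl]
        exact subset_span ⟨l, rfl⟩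
    set W : Ω → E := fun ω => ∑ m ∈ range (ι (Fin.last k) + 1), ξ m ω
    refine nonpos_iff_eq_zero.1 <| calc
      P {ω | ¬ LinearIndependent ℝ (fun l => ∑ m ∈ range (ι l + 1), ξ m ω)}
        = P {ω | ¬ LinearIndependent ℝ (Fin.snoc (X ω) (W ω))} := by
          congr! 4 with ω
          rw [← Fin.snoc_init_self fun l => ∑ m ∈ range (ι l + 1), ξ m ω]
          rfl
      _ ≤ P {ω | ¬ LinearIndependent ℝ (X ω)} := by
          refine (hind.indepFun_of_measurable_iSup hξ (Set.Iio_disjoint_Ici le_rfl) hX hY)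
            |>.measure_not_linearIndependent_snoc_le (hX.mono (hle _) le_rfl)
              (hY.mono (hle _) le_rfl) hk (fun g hg => ?_) fun ω => ?_
          · exact hind.measure_map_sum_eq_eq_zero hξ g
              (mem_Ico.2 ⟨hstart_le, lt_add_one _⟩) (hξg g hg _) 0
          · rw [sub_eq_of_eq_add (sum_range_add_sum_Ico _ (by omega)).symm]
            exact hspan ω
      _ = 0 := ih (by omega) (hι.comp Fin.strictMono_castSucc)

lemma iIndepFun.measure_map_eq_eq_zero_of_ae_linearIndependent
    {ξ : ℕ → Ω → E} (hind : iIndepFun ξ P) {f : E →ₗ[ℝ] ℝ} (hf : f ≠ 0) (c : ℝ)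
    (hdist : ∀ m c, P {ω | f (ξ m ω) = c} = P {ω | f (ξ 0 ω) = c})
    (hsymm : P {ω | f (ξ 0 ω) = -c} = P {ω | f (ξ 0 ω) = c}) {k : ℕ} (hk : finrank ℝ E ≤ k)
    (hLI : P {ω | ¬ LinearIndependent ℝ
      (fun l : Fin k => ∑ m ∈ range (2 * l + 1 + 1), ξ m ω)} = 0) :
    P {ω | f (ξ 0 ω) = c} = 0 := by
  have hf_meas : Measurable f := f.continuous_of_finiteDimensional.measurable
  set B : ℕ → Set E := fun m => f ⁻¹' {(-1) ^ m * c}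
  have hB (m : ℕ) : P (ξ m ⁻¹' B m) = P {ω | f (ξ 0 ω) = c} := by
    change P {ω | f (ξ m ω) = (-1) ^ m * c} = _
    rcases neg_one_pow_eq_or ℝ m with h | h <;> simp [h, hdist, hsymm]
  have hsub : ⋂ m ∈ range (2 * k), ξ m ⁻¹' B m ⊆
      {ω | ¬ LinearIndependent ℝ (fun l : Fin k => ∑ m ∈ range (2 * l + 1 + 1), ξ m ω)} := by
    intro ω hω hLIω
    refine (hLIω.card_lt_finrank_of_forall_map_eq_zero hf fun l => ?_).not_ge (by simpa using hk)
    rw [map_sum, sum_congr rfl fun m hm => Set.mem_iInter₂.1 hω m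
      (mem_range.2 ((mem_range.1 hm).trans_le (by omega)))]
    exact sum_range_neg_one_pow_mul_eq_zero c ⟨l + 1, by ring⟩
  have hk0 : 0 < k := by
    obtain ⟨x, hx⟩ := DFunLike.ne_iff.1 hf
    have : Nontrivial E := ⟨x, 0, fun h => hx (by simp [h])⟩
    exact finrank_pos.trans_le hk
  refine pow_eq_zero_iff (n := 2 * k) (by omega) |>.1 (nonpos_iff_eq_zero.1 ?_)
  calc P {ω | f (ξ 0 ω) = c} ^ (2 * k) = ∏ m ∈ range (2 * k), P (ξ m ⁻¹' B m) := by
        simp [hB]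
    _ = P (⋂ m ∈ range (2 * k), ξ m ⁻¹' B m) :=
        (hind.meas_biInter fun m _ => ⟨B m, hf_meas (measurableSet_singleton _), rfl⟩).symm
    _ ≤ _ := measure_mono hsub
    _ = 0 := hLI

end FiniteDimensional

end ProbabilityTheory

theorem stmt16_general {Ω : Type*} [MeasurableSpace Ω] (P : Measure Ω) [IsProbabilityMeasure P]
    (d : ℕ)
    (ξ : ℕ → Ω → Fin d → ℝ) (hmeas : ∀ i, Measurable (ξ i))
    (hindep : ProbabilityTheory.iIndepFun ξ P)
    (hid : ∀ i, P.map (ξ i) = P.map (ξ 0))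
    (hsymm : P.map (ξ 0) = P.map (fun ω => -(ξ 0 ω)))
    (S : ℕ → Ω → Fin d → ℝ) (hS : ∀ i ω, S i ω = ∑ m ∈ Finset.range (i + 1), ξ m ω) :
    ((∀ ι : Fin d → ℕ, StrictMono ι →
        P {ω | ¬ LinearIndependent ℝ (fun l => S (ι l) ω)} = 0) ↔
      (∀ (f : (Fin d → ℝ) →ₗ[ℝ] ℝ) (c : ℝ), f ≠ 0 → P {ω | f (ξ 0 ω) = c} = 0)) ∧
    ((∀ (f : (Fin d → ℝ) →ₗ[ℝ] ℝ) (c : ℝ), f ≠ 0 → P {ω | f (ξ 0 ω) = c} = 0) ↔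
      (∀ (f : (Fin d → ℝ) →ₗ[ℝ] ℝ), f ≠ 0 → ∀ i : ℕ, P {ω | f (S i ω) = 0} = 0)) := by
  obtain rfl : S = fun i ω => ∑ m ∈ range (i + 1), ξ m ω := funext fun i => funext (hS i)
  have hmeas_map (g : (Fin d → ℝ) →ₗ[ℝ] ℝ) : Measurable g :=
    g.continuous_of_finiteDimensional.measurable
  have hdist (g : (Fin d → ℝ) →ₗ[ℝ] ℝ) (m : ℕ) (c : ℝ) :
      P {ω | g (ξ m ω) = c} = P {ω | g (ξ 0 ω) = c} :=
    (IdentDistrib.comp ⟨(hmeas m).aemeasurable, (hmeas 0).aemeasurable, hid m⟩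
      (hmeas_map g)).measure_mem_eq (measurableSet_singleton c)
  have hneg := IdentDistrib.measure_map_eq_neg_eq
    ⟨(hmeas 0).aemeasurable, (hmeas 0).neg.aemeasurable, hsymm⟩
  have hii : (∀ (f : (Fin d → ℝ) →ₗ[ℝ] ℝ) (c : ℝ), f ≠ 0 → P {ω | f (ξ 0 ω) = c} = 0) ↔
      ∀ g : (Fin d → ℝ) →ₗ[ℝ] ℝ, g ≠ 0 → ∀ m c, P {ω | g (ξ m ω) = c} = 0 :=
    ⟨fun h g hg m c => (hdist g m c).trans (h g c hg), fun h f c hf => h f hf 0 c⟩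
  refine ⟨⟨fun h f c hf => ?_, fun h ι hι => ?_⟩, ⟨fun h f hf i => ?_, fun h f c hf => ?_⟩⟩
  · exact hindep.measure_map_eq_eq_zero_of_ae_linearIndependent hf c (hdist f) (hneg f c)
      (by simp) (h (fun l => 2 * l + 1) fun a b hab => by simpa using hab)
  · exact hindep.measure_not_linearIndependent_partialSums_eq_zero hmeas (hii.1 h) (by simp) hι
  · exact hindep.measure_map_sum_eq_eq_zero hmeas f (mem_range.2 i.succ_pos) (hii.1 h f hf 0) 0
  · have hprod := ((hindep.indepFun zero_ne_one).comp (hmeas_map f) (hmeas_map f))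
      |>.measure_eq_mul_measure_eq_neg_le c
    simp only [Function.comp_apply, hdist f 1, hneg] at hprod
    refine (mul_self_eq_zero.1 (nonpos_iff_eq_zero.1 (hprod.trans_eq ?_)))
    simpa [sum_range_succ] using h f hf 1

/-- For i.i.d. symmetric random vectors `ξ_1,ξ_2,...` in `ℝ^d` with partial sums `S_i`,
the following are equivalent: (i) any `d` of the partial sums are a.s. linearly
independent; (ii) every affine hyperplane `{y : f(y) = c}` (with `f` a nonzero linear
functional) carries no mass of `ξ_1`; (iii) every linear hyperplane `{y : f(y) = 0}`
carries no mass of any `S_i`. -/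
theorem stmt16 {Ω : Type*} [MeasurableSpace Ω] (P : Measure Ω) [IsProbabilityMeasure P]
    (d : ℕ) (hd : 0 < d)
    (ξ : ℕ → Ω → Fin d → ℝ) (hmeas : ∀ i, Measurable (ξ i))
    (hindep : ProbabilityTheory.iIndepFun ξ P)
    (hid : ∀ i, P.map (ξ i) = P.map (ξ 0))
    (hsymm : P.map (ξ 0) = P.map (fun ω => -(ξ 0 ω)))
    (S : ℕ → Ω → Fin d → ℝ) (hS : ∀ i ω, S i ω = ∑ m ∈ Finset.range (i + 1), ξ m ω) :
    ((∀ ι : Fin d → ℕ, StrictMono ι →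
        P {ω | ¬ LinearIndependent ℝ (fun l => S (ι l) ω)} = 0) ↔
      (∀ (f : (Fin d → ℝ) →ₗ[ℝ] ℝ) (c : ℝ), f ≠ 0 → P {ω | f (ξ 0 ω) = c} = 0)) ∧
    ((∀ (f : (Fin d → ℝ) →ₗ[ℝ] ℝ) (c : ℝ), f ≠ 0 → P {ω | f (ξ 0 ω) = c} = 0) ↔
      (∀ (f : (Fin d → ℝ) →ₗ[ℝ] ℝ), f ≠ 0 → ∀ i : ℕ, P {ω | f (S i ω) = 0} = 0)) :=
  stmt16_general P d ξ hmeas hindep hid hsymm S hS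
end
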